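/- arXiv:2403.13159 — 4 statements merged into one kernel-verified Lean document; each statement's English description precedes it below -/
import Mathlib

section
/- Let 2 < p_1 < p_2 < … < p_k be primes and n = p_1 p_2 ⋯ p_k. Then ∏_{l=1}^{k-2} p_l^{2^{k-1-l} - 1} ≤ n^{2^{k-1}/k - 1}. -/
/-!
After taking logarithms the inequality is Chebyshev's sum inequality for the decreasing weights
`2 ^ (k - 1 - l) - 1` against the increasing `log p_l`, over all `1 ≤ l ≤ k`: the weights of
`l = k - 1` and `l = k` vanish, and all weights sum to `2 ^ (k - 1) - k`.
-/

open Finset Real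

theorem AntivaryOn.prod_rpow_le_prod_rpow_sum_div_card {ι : Type*} {s : Finset ι} {w x : ι → ℝ}
    (hwx : AntivaryOn w x s) (hx : ∀ i ∈ s, 0 < x i) :
    ∏ i ∈ s, x i ^ w i ≤ (∏ i ∈ s, x i) ^ ((∑ i ∈ s, w i) / #s) := by
  rcases s.eq_empty_or_nonempty with rfl | hs
  · simp
  have hlog : AntivaryOn w (log ∘ x) s :=
    hwx.comp_monotoneOn_right <| strictMonoOn_log.monotoneOn.mono <| by
      rintro _ ⟨i, hi, rfl⟩
      exact hx i hi
  have hcard : (0 : ℝ) < #s := by exact_mod_cast hs.card_pos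
  have hprod : 0 < ∏ i ∈ s, x i := prod_pos hx
  rw [← log_le_log_iff (prod_pos fun i hi => rpow_pos_of_pos (hx i hi) _)
      (rpow_pos_of_pos hprod _), log_rpow hprod, log_prod fun i hi => (hx i hi).ne',
    log_prod fun i hi => (rpow_pos_of_pos (hx i hi) _).ne',
    sum_congr rfl fun i hi => log_rpow (hx i hi) _, div_mul_eq_mul_div, le_div_iff₀ hcard,
    mul_comm]
  exact hlog.card_mul_sum_le_sum_mul_sum

theorem Nat.sum_Icc_two_pow_sub (k : ℕ) : ∑ l ∈ Icc 1 (k + 1), 2 ^ (k - l) = 2 ^ k := by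
  have hreflect : ∑ l ∈ Icc 1 k, 2 ^ (k - l) = ∑ j ∈ range k, 2 ^ j :=
    sum_nbij' (k - ·) (k - ·) (fun l hl => by simp only [mem_Icc, mem_range] at hl ⊢; omega)
      (fun j hj => by simp only [mem_Icc, mem_range] at hj ⊢; omega)
      (fun l hl => by simp only [mem_Icc] at hl; omega)
      (fun j hj => by simp only [mem_range] at hj; omega) fun _ _ => rfl
  rw [sum_Icc_succ_top (by omega), hreflect, Nat.sub_eq_zero_of_le (by omega), pow_zero,
    Nat.geomSum_eq le_rfl, Nat.add_one_sub_one, Nat.div_one, Nat.sub_add_cancel Nat.one_le_two_pow]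

theorem prod_Icc_pow_eq_prod_Icc_rpow (k : ℕ) (x : ℕ → ℝ) :
    ∏ l ∈ Icc 1 (k - 2), x l ^ (2 ^ (k - 1 - l) - 1) =
      ∏ l ∈ Icc 1 k, x l ^ ((2 : ℝ) ^ (k - 1 - l) - 1) := by
  calc ∏ l ∈ Icc 1 (k - 2), x l ^ (2 ^ (k - 1 - l) - 1)
      = ∏ l ∈ Icc 1 (k - 2), x l ^ ((2 : ℝ) ^ (k - 1 - l) - 1) :=
        prod_congr rfl fun l _ => by
          rw [← rpow_natCast, Nat.cast_sub Nat.one_le_two_pow]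
          push_cast
          rfl
    _ = ∏ l ∈ Icc 1 k, x l ^ ((2 : ℝ) ^ (k - 1 - l) - 1) := by
        refine prod_subset (Icc_subset_Icc_right (by omega)) fun l hl hl' => ?_
        simp only [mem_Icc, not_and, not_le] at hl hl'
        rw [show k - 1 - l = 0 by omega]
        simp

theorem prod_pow_le_rpow_general (k : ℕ) (hk : 2 ≤ k) (p : ℕ → ℕ)
    (hprime : ∀ i, 1 ≤ i → i ≤ k → (p i).Prime)
    (hmono : ∀ i j, 1 ≤ i → i < j → j ≤ k → p i < p j)
    (n : ℕ) (hn : n = ∏ i ∈ Finset.Icc 1 k, p i) :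
    (∏ l ∈ Finset.Icc 1 (k - 2), ((p l : ℝ) ^ (2 ^ (k - 1 - l) - 1))) ≤
      (n : ℝ) ^ ((2 ^ (k - 1) : ℝ) / k - 1) := by
  have hpos : ∀ i ∈ Icc 1 k, (0 : ℝ) < p i := fun i hi => by
    rw [mem_Icc] at hi
    exact_mod_cast (hprime i hi.1 hi.2).pos
  have hanti : AntivaryOn (fun l => (2 : ℝ) ^ (k - 1 - l) - 1) (fun l => (p l : ℝ)) (Icc 1 k) := by
    refine AntitoneOn.antivaryOn (fun i _ j _ hij => ?_) fun i hi j hj hij => ?_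
    · gcongr; norm_num
    · rw [coe_Icc, Set.mem_Icc] at hi hj
      rcases hij.lt_or_eq with hij | rfl
      · exact_mod_cast (hmono i j hi.1 hij hj.2).le
      · rfl
  have hsum : ∑ l ∈ Icc 1 k, ((2 : ℝ) ^ (k - 1 - l) - 1) = 2 ^ (k - 1) - k := by
    obtain ⟨m, rfl⟩ : ∃ m, k = m + 1 := ⟨k - 1, by omega⟩
    have hgeom : ∑ l ∈ Icc 1 (m + 1), (2 : ℝ) ^ (m - l) = 2 ^ m := by
      exact_mod_cast Nat.sum_Icc_two_pow_sub m
    simp [sum_sub_distrib, hgeom]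
  have hk0 : (k : ℝ) ≠ 0 := by norm_cast; omega
  have := hanti.prod_rpow_le_prod_rpow_sum_div_card hpos
  rwa [← prod_Icc_pow_eq_prod_Icc_rpow, hsum, Nat.card_Icc, Nat.add_sub_cancel, sub_div,
    div_self hk0, ← Nat.cast_prod, ← hn] at this

theorem prod_pow_le_rpow (k : ℕ) (hk : 2 ≤ k) (p : ℕ → ℕ)
    (hprime : ∀ i, 1 ≤ i → i ≤ k → (p i).Prime)
    (h2 : 2 < p 1)
    (hmono : ∀ i j, 1 ≤ i → i < j → j ≤ k → p i < p j)
    (n : ℕ) (hn : n = ∏ i ∈ Finset.Icc 1 k, p i) :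
    (∏ l ∈ Finset.Icc 1 (k - 2), ((p l : ℝ) ^ (2 ^ (k - 1 - l) - 1))) ≤
      (n : ℝ) ^ ((2 ^ (k - 1) : ℝ) / k - 1) :=
  prod_pow_le_rpow_general k hk p hprime hmono n hn
end

section
/- Let 2 < p_1 < … < p_k be primes, n = p_1⋯p_k, and let A(n) denote the largest absolute value of the coefficients of Φ_n. If A(n) ≤ ∏_{l=1}^{k-2} p_l^{2^{k-1-l}-1} (the Bateman bound), then A(n) ≤ n^{2^{k-1}/k - 1}. -/
/-!
Write `e l = 2 ^ (k - 1 - l) - 1`, which vanishes for `l = k - 1, k`, so the Bateman bound is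
`∏_{l ≤ k} p_l ^ e_l`. The exponents decrease while the primes increase, so Chebyshev's sum
inequality applied to `e_l` and `log p_l` bounds `∑ e_l log p_l` by `(∑ e_l / k) ∑ log p_l`,
that is, the Bateman bound by `n ^ (∑ e_l / k)`; and `∑ e_l = 2 ^ (k - 1) - k`.
-/

/-- `A n` is the largest absolute value of the coefficients of the `n`-th cyclotomic polynomial. -/
noncomputable def A (n : ℕ) : ℕ :=
  (Polynomial.cyclotomic n ℤ).support.sup fun i => ((Polynomial.cyclotomic n ℤ).coeff i).natAbs

open Finset

theorem AntivaryOn.prod_pow_le_prod_rpow {ι : Type*} {s : Finset ι} {e : ι → ℕ} {q : ι → ℝ}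
    (hq : ∀ i ∈ s, 0 < q i) (hqe : AntivaryOn e q s) :
    ∏ i ∈ s, q i ^ e i ≤ (∏ i ∈ s, q i) ^ ((∑ i ∈ s, e i : ℝ) / #s) := by
  rcases s.eq_empty_or_nonempty with rfl | hs
  · simp
  have hlog : AntivaryOn (fun i ↦ (e i : ℝ)) (fun i ↦ Real.log (q i)) s := fun i hi j hj h ↦
    Nat.cast_le.2 <| hqe hi hj <| (Real.log_lt_log_iff (hq i hi) (hq j hj)).1 h
  have hchebyshev := hlog.card_mul_sum_le_sum_mul_sum
  have hne : ∀ i ∈ s, q i ≠ 0 := fun i hi ↦ (hq i hi).ne'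
  rw [← Real.log_le_log_iff (prod_pos fun i hi ↦ pow_pos (hq i hi) _)
      (Real.rpow_pos_of_pos (prod_pos hq) _), Real.log_rpow (prod_pos hq),
    Real.log_prod fun i hi ↦ pow_ne_zero _ (hne i hi), Real.log_prod hne,
    div_mul_eq_mul_div, le_div_iff₀ (by simpa using hs)]
  simp only [Real.log_pow]
  linarith

theorem prod_Icc_sub_two_pow_two_pow_sub_one_eq {M : Type*} [CommMonoid M] (x : ℕ → M) (k : ℕ) :
    ∏ l ∈ Icc 1 (k - 2), x l ^ (2 ^ (k - 1 - l) - 1) =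
      ∏ l ∈ Icc 1 k, x l ^ (2 ^ (k - 1 - l) - 1) :=
  prod_subset (Icc_subset_Icc_right (by omega)) fun l hl hl' ↦ by
    simp only [mem_Icc, not_and, not_le] at hl hl'
    rw [show k - 1 - l = 0 by omega, pow_zero, Nat.sub_self, pow_zero]

theorem sum_Icc_two_pow_sub_one_add (m : ℕ) :
    ∑ l ∈ Icc 1 (m + 1), (2 ^ (m - l) - 1) + (m + 1) = 2 ^ m := by
  induction m with
  | zero => simp
  | succ m ih =>
    rw [Icc_eq_cons_Ioc (by omega), sum_cons, ← Icc_add_one_left_eq_Ioc, ← map_add_right_Icc,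
      sum_map]
    simp only [addRightEmbedding_apply, Nat.add_sub_add_right, Nat.add_sub_cancel]
    have := Nat.one_le_two_pow (n := m)
    rw [pow_succ]
    omega

theorem A_le_rpow_of_bateman_general (k : ℕ) (hk : 2 ≤ k) (p : ℕ → ℕ)
    (hprime : ∀ i, 1 ≤ i → i ≤ k → (p i).Prime)
    (hmono : ∀ i j, 1 ≤ i → i < j → j ≤ k → p i < p j)
    (n : ℕ) (hn : n = ∏ i ∈ Finset.Icc 1 k, p i)
    (hbateman : (A n : ℝ) ≤ ∏ l ∈ Finset.Icc 1 (k - 2), ((p l : ℝ) ^ (2 ^ (k - 1 - l) - 1))) :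
    (A n : ℝ) ≤ (n : ℝ) ^ ((2 ^ (k - 1) : ℝ) / k - 1) := by
  have hp : StrictMonoOn (fun i ↦ (p i : ℝ)) (Icc 1 k) := fun i hi j hj hij ↦ by
    rw [mem_coe, mem_Icc] at hi hj
    exact Nat.cast_lt.2 (hmono i j hi.1 hij hj.2)
  have he : AntitoneOn (fun l ↦ 2 ^ (k - 1 - l) - 1) (Icc 1 k) := fun i _ j _ hij ↦
    Nat.sub_le_sub_right (Nat.pow_le_pow_right two_pos (by omega)) 1
  have hsum : ∑ l ∈ Icc 1 k, ((2 ^ (k - 1 - l) - 1 : ℕ) : ℝ) = 2 ^ (k - 1) - k := by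
    have := sum_Icc_two_pow_sub_one_add (k - 1)
    rw [Nat.sub_add_cancel (by omega)] at this
    exact eq_sub_of_add_eq (by exact_mod_cast this)
  have hk0 : (k : ℝ) ≠ 0 := by positivity
  calc (A n : ℝ) ≤ ∏ l ∈ Icc 1 k, (p l : ℝ) ^ (2 ^ (k - 1 - l) - 1) := by
        rwa [← prod_Icc_sub_two_pow_two_pow_sub_one_eq]
    _ ≤ (∏ i ∈ Icc 1 k, (p i : ℝ)) ^ ((2 ^ (k - 1) - k : ℝ) / k) := by
        have := (he.antivaryOn hp.monotoneOn).prod_pow_le_prod_rpow fun i hi ↦ by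
          rw [mem_Icc] at hi
          exact_mod_cast (hprime i hi.1 hi.2).pos
        rwa [hsum, Nat.card_Icc, Nat.add_sub_cancel] at this
    _ = (n : ℝ) ^ ((2 ^ (k - 1) : ℝ) / k - 1) := by
        rw [hn, Nat.cast_prod, sub_div, div_self hk0]

theorem A_le_rpow_of_bateman (k : ℕ) (hk : 2 ≤ k) (p : ℕ → ℕ)
    (hprime : ∀ i, 1 ≤ i → i ≤ k → (p i).Prime)
    (h2 : 2 < p 1)
    (hmono : ∀ i j, 1 ≤ i → i < j → j ≤ k → p i < p j)
    (n : ℕ) (hn : n = ∏ i ∈ Finset.Icc 1 k, p i)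
    (hbateman : (A n : ℝ) ≤ ∏ l ∈ Finset.Icc 1 (k - 2), ((p l : ℝ) ^ (2 ^ (k - 1 - l) - 1))) :
    (A n : ℝ) ≤ (n : ℝ) ^ ((2 ^ (k - 1) : ℝ) / k - 1) :=
  A_le_rpow_of_bateman_general k hk p hprime hmono n hn hbateman
end

section
/- Let n = p_1 ⋯ p_k be a product of distinct odd primes with 2 < p_1 < … < p_k, and let a be an integer coprime to p_1⋯p_{k-1}. Setting ε = e^{2πi/(p_1⋯p_{k-1})}, one has |Φ_n(ε^a)| = p_k · ∏_{d ∣ n, d ≠ n, d ≠ n/p_k} |sin(a d π /(p_1⋯p_{k-1}))|^{μ(n/d)}. -/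
/-!
Write `n = m * q` with `q = p k`. Möbius inversion gives
`Φ_n = ∏_{d ∣ n} (X ^ d - 1) ^ μ (n / d)` in `K(X)`. The only factors vanishing at a primitive
`m`-th root of unity `z` are those with `d = n` and `d = m`; their exponents are `μ 1 = 1` and
`μ q = -1`, so they combine to `(X ^ n - 1) / (X ^ m - 1) = ∑_{j < q} X ^ (m * j)`, which equals
`q` at `z`. The remaining factors can be evaluated at `z`, and
`‖z ^ d - 1‖ = 2 * |sin (π a d / m)|`; the powers of `2` cancel because `∑_{d ∣ n} μ (n / d) = 0`
and `μ 1 + μ q = 0`.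
-/

open Polynomial ArithmeticFunction Real
open scoped ArithmeticFunction.Moebius

theorem prod_zpow_eq_zpow_sum₀ {ι G₀ : Type*} [CommGroupWithZero G₀] {x : G₀}
    (hx : x ≠ 0) (s : Finset ι) (e : ι → ℤ) : ∏ i ∈ s, x ^ e i = x ^ ∑ i ∈ s, e i := by
  induction s using Finset.cons_induction with
  | empty => simp
  | cons i s _ ih => rw [Finset.prod_cons, Finset.sum_cons, ih, zpow_add₀ hx]

theorem prod_zpow_mul_prod_pow_toNat_neg {ι G₀ : Type*} [CommGroupWithZero G₀]
    (s : Finset ι) (x : ι → G₀) (e : ι → ℤ) (hx : ∀ i ∈ s, x i ≠ 0) :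
    (∏ i ∈ s, x i ^ e i) * ∏ i ∈ s, x i ^ (-e i).toNat = ∏ i ∈ s, x i ^ (e i).toNat := by
  rw [← Finset.prod_mul_distrib]
  refine Finset.prod_congr rfl fun i hi => ?_
  rw [← zpow_natCast, ← zpow_natCast, ← zpow_add₀ (hx i hi)]
  congr 1
  omega

theorem Polynomial.eval_eq_mul_prod_zpow_of_algebraMap_eq {ι K : Type*} [Field K] {s : Finset ι}
    {f c : K[X]} {g : ι → K[X]} {e : ι → ℤ}
    (h : algebraMap K[X] (RatFunc K) f =
      algebraMap K[X] (RatFunc K) c * ∏ i ∈ s, algebraMap K[X] (RatFunc K) (g i) ^ e i)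
    {z : K} (hz : ∀ i ∈ s, (g i).eval z ≠ 0) :
    f.eval z = c.eval z * ∏ i ∈ s, (g i).eval z ^ e i := by
  have hinj := IsFractionRing.injective K[X] (RatFunc K)
  have hg : ∀ i ∈ s, algebraMap K[X] (RatFunc K) (g i) ≠ 0 := fun i hi =>
    (map_ne_zero_iff _ hinj).2 fun hgi => hz i hi (by rw [hgi, eval_zero])
  have hpoly : f * ∏ i ∈ s, g i ^ (-e i).toNat = c * ∏ i ∈ s, g i ^ (e i).toNat := by
    apply hinj
    simp only [map_mul, map_prod, map_pow, h, mul_assoc, prod_zpow_mul_prod_pow_toNat_neg s _ e hg]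
  have hev := congrArg (eval z) hpoly
  simp only [eval_mul, eval_prod, eval_pow] at hev
  rw [← prod_zpow_mul_prod_pow_toNat_neg s _ e hz, ← mul_assoc] at hev
  exact mul_right_cancel₀ (Finset.prod_ne_zero_iff.2 fun i hi => pow_ne_zero _ (hz i hi)) hev

@[to_additive sum_divisors_mul_prime]
theorem prod_divisors_mul_prime {M : Type*} [CommMonoid M] {m q : ℕ} (hq : q.Prime)
    (hm : m ≠ 0) (f : ℕ → M) :
    ∏ d ∈ (m * q).divisors, f d =
      (∏ d ∈ (m * q).divisors \ {m * q, m}, f d) * (f (m * q) * f m) := by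
  have hsub : {m * q, m} ⊆ (m * q).divisors := by
    simp [Finset.insert_subset_iff, hm, hq.ne_zero]
  have hmn : m * q ≠ m := fun h => hq.ne_one (by simpa [hm] using h)
  rw [← Finset.prod_sdiff hsub, Finset.prod_pair hmn]

theorem sum_sdiff_moebius_div_eq_zero {m q : ℕ} (hq : q.Prime) (hm : m ≠ 0) :
    ∑ d ∈ (m * q).divisors \ {m * q, m}, μ (m * q / d) = 0 := by
  have hmq : m * q ≠ 1 := fun h => hq.ne_one (Nat.eq_one_of_mul_eq_one_left h)
  have htotal : ∑ d ∈ (m * q).divisors, μ (m * q / d) = 0 := by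
    rw [Nat.sum_div_divisors, ← coe_mul_zeta_apply, moebius_mul_coe_zeta, one_apply_ne hmq]
  rw [sum_divisors_mul_prime hq hm, Nat.div_self (Nat.pos_of_ne_zero (mul_ne_zero hm hq.ne_zero)),
    Nat.mul_div_cancel_left _ (Nat.pos_of_ne_zero hm), moebius_apply_one,
    moebius_apply_prime hq] at htotal
  linarith

theorem IsPrimitiveRoot.pow_ne_one_of_mem_divisors_mul_prime_sdiff {M : Type*} [CommMonoid M]
    {z : M} {m q d : ℕ} (hz : IsPrimitiveRoot z m) (hq : q.Prime) (hm : m ≠ 0)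
    (hd : d ∈ (m * q).divisors \ {m * q, m}) : z ^ d ≠ 1 := by
  rw [Ne, hz.pow_eq_one_iff_dvd]
  rintro ⟨e, rfl⟩
  obtain ⟨hdiv, hne⟩ := Finset.mem_sdiff.1 hd
  have he : e ∣ q :=
    (Nat.mul_dvd_mul_iff_left (Nat.pos_of_ne_zero hm)).1 (Nat.dvd_of_mem_divisors hdiv)
  rcases hq.eq_one_or_self_of_dvd e he with rfl | rfl <;> simp at hne

theorem IsPrimitiveRoot.eval_cyclotomic_mul_prime {K : Type*} [Field K] {z : K} {m q : ℕ}
    (hz : IsPrimitiveRoot z m) (hq : q.Prime) (hm : m ≠ 0) :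
    (cyclotomic (m * q) K).eval z =
      q * ∏ d ∈ (m * q).divisors \ {m * q, m}, (z ^ d - 1) ^ μ (m * q / d) := by
  have hXm : algebraMap K[X] (RatFunc K) (X ^ m - 1) ≠ 0 :=
    (map_ne_zero_iff _ (IsFractionRing.injective _ _)).2
      (X_pow_sub_C_ne_zero (Nat.pos_of_ne_zero hm) 1)
  have hgeom : (X ^ (m * q) - 1 : K[X]) = (∑ j ∈ Finset.range q, (X ^ m) ^ j) * (X ^ m - 1) := by
    rw [geom_sum_mul, ← pow_mul]
  have h := cyclotomic_eq_prod_X_pow_sub_one_pow_moebius (n := m * q) K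
  rw [Nat.prod_divisorsAntidiagonal' (f := fun i j => algebraMap K[X] _ (X ^ j - 1) ^ μ i),
    prod_divisors_mul_prime hq hm,
    Nat.div_self (Nat.pos_of_ne_zero (mul_ne_zero hm hq.ne_zero)),
    Nat.mul_div_cancel_left _ (Nat.pos_of_ne_zero hm), moebius_apply_one, moebius_apply_prime hq,
    zpow_one, zpow_neg_one, hgeom, map_mul, mul_inv_cancel_right₀ hXm] at h
  rw [eval_eq_mul_prod_zpow_of_algebraMap_eq (h.trans (mul_comm _ _)) fun d hd => by
    simpa [sub_eq_zero] using hz.pow_ne_one_of_mem_divisors_mul_prime_sdiff hq hm hd]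
  simp [eval_finsetSum, hz.pow_eq_one]

theorem norm_exp_two_pi_I_div_zpow_pow_sub_one (m : ℕ) (a : ℤ) (d : ℕ) :
    ‖(Complex.exp (2 * π * Complex.I / m) ^ a) ^ d - 1‖ = 2 * |sin (a * d * π / m)| := by
  rw [← Complex.exp_int_mul, ← Complex.exp_nat_mul,
    show (d : ℂ) * (a * (2 * π * Complex.I / m)) = Complex.I * (2 * (a * d * π / m) : ℝ) by
      push_cast; ring,
    Complex.norm_exp_I_mul_ofReal_sub_one]
  simp

theorem abs_cyclotomic_eval_root_of_unity_general (k : ℕ) (hk : 1 ≤ k) (p : ℕ → ℕ)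
    (hprime : ∀ i, 1 ≤ i → i ≤ k → (p i).Prime)
    (n m : ℕ) (hn : n = ∏ i ∈ Finset.Icc 1 k, p i) (hm : m = ∏ i ∈ Finset.Icc 1 (k - 1), p i)
    (a : ℤ) (ha : IsCoprime a (m : ℤ))
    (ε : ℂ) (hε : ε = Complex.exp (2 * Real.pi * Complex.I / m)) :
    ‖(Polynomial.cyclotomic n ℂ).eval (ε ^ a)‖ =
      (p k : ℝ) * ∏ d ∈ n.divisors \ {n, n / p k},
        (|Real.sin ((a : ℝ) * d * Real.pi / m)| ^ (ArithmeticFunction.moebius (n / d) : ℤ)) := by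
  have hq : (p k).Prime := hprime k hk le_rfl
  have hm0 : m ≠ 0 := hm ▸ Finset.prod_ne_zero_iff.2 fun i hi =>
    (hprime i (Finset.mem_Icc.1 hi).1 ((Finset.mem_Icc.1 hi).2.trans (Nat.sub_le k 1))).ne_zero
  obtain rfl : n = m * p k := calc
    n = ∏ i ∈ Finset.Icc 1 (k - 1 + 1), p i := by rw [Nat.sub_add_cancel hk, hn]
    _ = m * p k := by rw [Finset.prod_Icc_succ_top (by omega), Nat.sub_add_cancel hk, hm]
  have hζ : IsPrimitiveRoot (ε ^ a) m := hε ▸ (Complex.isPrimitiveRoot_exp m hm0).zpow_of_gcd_eq_one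
    a (Int.isCoprime_iff_gcd_eq_one.1 ha)
  rw [Nat.mul_div_cancel m hq.pos, hζ.eval_cyclotomic_mul_prime hq hm0, norm_mul, norm_prod,
    Complex.norm_natCast]
  congr 1
  simp_rw [norm_zpow, hε, norm_exp_two_pi_I_div_zpow_pow_sub_one, mul_zpow,
    Finset.prod_mul_distrib, prod_zpow_eq_zpow_sum₀ (two_ne_zero' ℝ),
    sum_sdiff_moebius_div_eq_zero hq hm0, zpow_zero, one_mul]

theorem abs_cyclotomic_eval_root_of_unity (k : ℕ) (hk : 1 ≤ k) (p : ℕ → ℕ)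
    (hprime : ∀ i, 1 ≤ i → i ≤ k → (p i).Prime)
    (h2 : 2 < p 1)
    (hmono : ∀ i j, 1 ≤ i → i < j → j ≤ k → p i < p j)
    (n m : ℕ) (hn : n = ∏ i ∈ Finset.Icc 1 k, p i) (hm : m = ∏ i ∈ Finset.Icc 1 (k - 1), p i)
    (a : ℤ) (ha : IsCoprime a (m : ℤ))
    (ε : ℂ) (hε : ε = Complex.exp (2 * Real.pi * Complex.I / m)) :
    ‖(Polynomial.cyclotomic n ℂ).eval (ε ^ a)‖ =
      (p k : ℝ) * ∏ d ∈ n.divisors \ {n, n / p k},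
        (|Real.sin ((a : ℝ) * d * Real.pi / m)| ^ (ArithmeticFunction.moebius (n / d) : ℤ)) :=
  abs_cyclotomic_eval_root_of_unity_general k hk p hprime n m hn hm a ha ε hε
end

section
/- Let M be a positive integer and h(x) ∈ ℤ[x] + (1/2)x^d a polynomial of degree d with leading coefficient of the form b + 1/2 for some integer b, taking half-integer or integer values at integers in such a way that h(p)π/M is well defined. If M(p) = ∏_{s=1}^{N}(p + 2j_s) is a monic degree-N polynomial with N = d + 1, then |sin(h(p)π/M(p))| = Θ(1/p) as p → ∞; i.e., there exist constants c, C > 0 depending only on the data such that c/p ≤ |sin(h(p)π/M(p))| ≤ C/p for all large p. -/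
/-!
Write `M(p) = ∏ s, (p + 2 j s)`. Since `deg M = deg h + 1` and `M` is monic, `p · h(p) / M(p)`
tends to the leading coefficient `b + 1/2` of `h`, so `θ(p) = h(p) π / M(p)` satisfies
`p θ(p) → (b + 1/2) π`. In particular `θ(p) → 0`, hence `sin θ(p) ∼ θ(p)`, and
`p |sin θ(p)| → |b + 1/2| π`, which is nonzero because `b` is an integer.
-/

open Filter Polynomial Real Topology Finset

lemma Real.mul_sinc (x : ℝ) : x * sinc x = sin x := by
  rcases eq_or_ne x 0 with rfl | hx
  · simp
  · rw [sinc_of_ne_zero hx, mul_div_cancel₀ _ hx]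

lemma Int.cast_add_half_ne_zero (b : ℤ) : (b : ℝ) + 1 / 2 ≠ 0 := by
  intro hb
  have : (2 * b + 1 : ℝ) = 0 := by linarith
  norm_cast at this
  omega

namespace Polynomial

lemma degree_prod_X_add_C {R ι : Type*} [CommRing R] [Nontrivial R] (s : Finset ι)
    (a : ι → R) : (∏ i ∈ s, (X + C (a i))).degree = (#s : WithBot ℕ) := by
  rw [degree_prod_of_monic _ _ fun i _ => monic_X_add_C (a i)]
  simp [degree_X_add_C]

lemma leadingCoeff_prod_X_add_C {R ι : Type*} [CommRing R] (s : Finset ι) (a : ι → R) :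
    (∏ i ∈ s, (X + C (a i))).leadingCoeff = 1 :=
  (monic_prod_of_monic _ _ fun i _ => monic_X_add_C (a i)).leadingCoeff

lemma tendsto_mul_eval_div_eval_of_degree_eq_add_one {𝕜 : Type*} [NormedField 𝕜]
    [LinearOrder 𝕜] [IsStrictOrderedRing 𝕜] [OrderTopology 𝕜] {P Q : 𝕜[X]}
    (hdeg : Q.degree = P.degree + 1) :
    Tendsto (fun x => x * (P.eval x / Q.eval x)) atTop
      (𝓝 (P.leadingCoeff / Q.leadingCoeff)) := by
  have := div_tendsto_atTop_leadingCoeff_div_of_degree_eq (P * X) Q (by rw [degree_mul_X, hdeg])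
  rw [leadingCoeff_mul_X] at this
  refine this.congr fun x => ?_
  rw [eval_mul, eval_X, mul_comm, mul_div_assoc]

end Polynomial

lemma tendsto_mul_sin_of_tendsto_mul {g : ℝ → ℝ} {L : ℝ}
    (hg : Tendsto (fun x => x * g x) atTop (𝓝 L)) :
    Tendsto (fun x => x * sin (g x)) atTop (𝓝 L) := by
  have hg0 : Tendsto g atTop (𝓝 0) := by
    have := tendsto_inv_atTop_zero.mul hg
    rw [zero_mul] at this
    refine this.congr' ?_
    filter_upwards [eventually_ne_atTop 0] with x hx
    rw [inv_mul_cancel_left₀ hx]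
  have := hg.mul ((continuous_sinc.tendsto 0).comp hg0)
  rw [sinc_zero, mul_one] at this
  refine this.congr fun x => ?_
  simp only [Function.comp_apply, mul_assoc, mul_sinc]

lemma exists_div_le_abs_le_div_of_tendsto_mul {f : ℝ → ℝ} {L : ℝ} (hL : L ≠ 0)
    (hf : Tendsto (fun x => x * f x) atTop (𝓝 L)) :
    ∃ c C : ℝ, 0 < c ∧ 0 < C ∧ ∃ x₀ : ℝ, ∀ x : ℝ, x₀ ≤ x →
      c / x ≤ |f x| ∧ |f x| ≤ C / x := by
  have hL' : 0 < |L| := abs_pos.mpr hL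
  have hmem : ∀ᶠ x in atTop, |x * f x| ∈ Set.Ioo (|L| / 2) (2 * |L|) :=
    hf.abs.eventually (Ioo_mem_nhds (by linarith) (by linarith))
  obtain ⟨x₀, hx₀⟩ := (hmem.and (eventually_gt_atTop 0)).exists_forall_of_atTop
  refine ⟨|L| / 2, 2 * |L|, by positivity, by positivity, x₀, fun x hx => ?_⟩
  obtain ⟨⟨hlo, hhi⟩, hxpos⟩ := hx₀ x hx
  rw [abs_mul, abs_of_pos hxpos] at hlo hhi
  rw [div_le_iff₀ hxpos, le_div_iff₀ hxpos]
  constructor <;> linarith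

theorem abs_sin_theta_one_div_p (d : ℕ) (h : Polynomial ℝ) (b : ℤ)
    (hdeg : h.degree = d) (hlead : h.leadingCoeff = (b : ℝ) + 1 / 2)
    (N : ℕ) (hN : N = d + 1) (j : Fin N → ℤ) :
    ∃ c C : ℝ, 0 < c ∧ 0 < C ∧ ∃ p₀ : ℝ, ∀ p : ℝ, p₀ ≤ p →
      c / p ≤ |Real.sin (h.eval p * Real.pi / ∏ s, (p + 2 * j s))| ∧
      |Real.sin (h.eval p * Real.pi / ∏ s, (p + 2 * j s))| ≤ C / p := by
  set M : ℝ[X] := ∏ s, (X + C (2 * j s : ℝ))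
  have hMeval (p : ℝ) : M.eval p = ∏ s, (p + 2 * j s) := by simp [M, eval_prod]
  have hMdeg : M.degree = h.degree + 1 := by
    rw [degree_prod_X_add_C, hdeg, card_univ, Fintype.card_fin, hN]
    norm_cast
  have hratio := tendsto_mul_eval_div_eval_of_degree_eq_add_one hMdeg
  rw [hlead, leadingCoeff_prod_X_add_C, div_one] at hratio
  have htheta : Tendsto (fun p => p * (h.eval p * π / ∏ s, (p + 2 * j s))) atTop
      (𝓝 (((b : ℝ) + 1 / 2) * π)) := by
    refine (hratio.mul_const π).congr fun p => ?_
    rw [← hMeval]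
    ring
  exact exists_div_le_abs_le_div_of_tendsto_mul
    (mul_ne_zero (Int.cast_add_half_ne_zero b) pi_ne_zero) (tendsto_mul_sin_of_tendsto_mul htheta)
end
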